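/- arXiv:1205.5941 — 5 statements merged into one kernel-verified Lean document; each statement's English description precedes it below -/
import Mathlib

section
/- Let V be an at most countable type and let G be a simple graph on V whose vertex degrees are uniformly bounded (there exists c > 0 with deg(v) ≤ c for every vertex v; in particular G is locally finite). Then G admits a balanced orientation — that is, a relation r : V → V → Prop such that r u v implies that u and v are adjacent in G, for every adjacent pair {u,v} exactly one of r u v and r v u holds, and for every vertex v the (finite) number of vertices u with r v u equals the number of vertices u with r u v — if and only if every vertex of G has even degree. -/
/-!
Balanced partial orientations (sets of arcs, at most one per edge, with in-degree equal to
out-degree everywhere) are closed under unions of chains, because the arcs at a vertex are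
finitely many and so already lie in one member of the chain. Zorn's lemma gives a maximal one,
`D`. At every vertex the degree is the number of edges left unoriented by `D` plus twice the
out-degree, so the unoriented edges again have even degree everywhere. If one were left, walk
along unoriented edges from it in both directions, never stepping straight back (possible as
no degree is `1`). Either the walk repeats a vertex, and its shortest repetition is a cycle, or
it is a double ray; oriented along itself, either one is balanced and enlarges `D`.
-/

namespace SimpleGraph

variable {V : Type*} {G H : SimpleGraph V}

structure IsBalancedPartialOrientation (G : SimpleGraph V) (D : Set (V × V)) : Prop where
  adj : ∀ p ∈ D, G.Adj p.1 p.2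
  swap_notMem : ∀ u v, (u, v) ∈ D → (v, u) ∉ D
  ncard_out_eq_ncard_in : ∀ v, {u | (v, u) ∈ D}.ncard = {u | (u, v) ∈ D}.ncard

abbrev unoriented (G : SimpleGraph V) (D : Set (V × V)) : SimpleGraph V :=
  G \ fromRel fun u w => (u, w) ∈ D

namespace IsBalancedPartialOrientation

variable {D D' : Set (V × V)}

lemma out_subset (hD : IsBalancedPartialOrientation G D) (v : V) :
    {u | (v, u) ∈ D} ⊆ G.neighborSet v :=
  fun u hu => hD.adj (v, u) hu

lemma in_subset (hD : IsBalancedPartialOrientation G D) (v : V) :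
    {u | (u, v) ∈ D} ⊆ G.neighborSet v :=
  fun u hu => (hD.adj (u, v) hu).symm

lemma mono (hD : IsBalancedPartialOrientation H D) (hle : H ≤ G) :
    IsBalancedPartialOrientation G D :=
  ⟨fun p hp => hle (hD.adj p hp), hD.swap_notMem, hD.ncard_out_eq_ncard_in⟩

lemma ncard_neighborSet (hD : IsBalancedPartialOrientation G D) {v : V}
    (hfin : (G.neighborSet v).Finite) :
    (G.neighborSet v).ncard =
      ((unoriented G D).neighborSet v).ncard + 2 * {u | (v, u) ∈ D}.ncard := by
  have hcover : G.neighborSet v =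
      (unoriented G D).neighborSet v ∪ ({u | (v, u) ∈ D} ∪ {u | (u, v) ∈ D}) := by
    ext u
    simp only [mem_neighborSet, sdiff_adj, fromRel_adj, Set.mem_union, Set.mem_ofPred_eq]
    constructor
    · intro hu
      tauto
    · rintro (⟨hu, -⟩ | hu | hu)
      exacts [hu, hD.adj _ hu, (hD.adj _ hu).symm]
  have hdisj_dir : Disjoint {u | (v, u) ∈ D} {u | (u, v) ∈ D} :=
    Set.disjoint_left.2 fun u => hD.swap_notMem v u
  have hdisj : Disjoint ((unoriented G D).neighborSet v)
      ({u | (v, u) ∈ D} ∪ {u | (u, v) ∈ D}) := by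
    refine Set.disjoint_left.2 fun u hu hD' => hu.2 ⟨hu.1.ne, ?_⟩
    simpa only [Set.mem_union, Set.mem_ofPred_eq] using hD'
  have hout := hfin.subset (hD.out_subset v)
  have hin := hfin.subset (hD.in_subset v)
  rw [hcover, Set.ncard_union_eq hdisj (hfin.subset fun u hu => hu.1) (hout.union hin),
    Set.ncard_union_eq hdisj_dir hout hin, ← hD.ncard_out_eq_ncard_in, two_mul]

lemma even_ncard_neighborSet_iff (hD : IsBalancedPartialOrientation G D) {v : V}
    (hfin : (G.neighborSet v).Finite) :
    Even (G.neighborSet v).ncard ↔ Even ((unoriented G D).neighborSet v).ncard := by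
  rw [hD.ncard_neighborSet hfin, Nat.even_add, iff_true_intro (even_two_mul _), iff_true]

lemma even_ncard_neighborSet (hD : IsBalancedPartialOrientation G D)
    (hcover : ∀ u w, G.Adj u w → (u, w) ∈ D ∨ (w, u) ∈ D) {v : V}
    (hfin : (G.neighborSet v).Finite) : Even (G.neighborSet v).ncard := by
  have hnone : unoriented G D = ⊥ := by
    ext u w
    simp only [sdiff_adj, fromRel_adj, bot_adj, iff_false, not_and]
    exact fun huw h => h huw.ne (hcover u w huw)
  rw [hD.even_ncard_neighborSet_iff hfin, hnone, neighborSet_bot, Set.ncard_empty]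
  exact .zero

lemma union (hfin : ∀ v, (G.neighborSet v).Finite) (hD : IsBalancedPartialOrientation G D)
    (hD' : IsBalancedPartialOrientation G D')
    (hdisj : ∀ u w, (u, w) ∈ D' → (u, w) ∉ D ∧ (w, u) ∉ D) :
    IsBalancedPartialOrientation G (D ∪ D') where
  adj p := by
    rintro (hp | hp)
    exacts [hD.adj p hp, hD'.adj p hp]
  swap_notMem u w := by
    rintro (h | h) (h' | h')
    exacts [hD.swap_notMem u w h h', (hdisj w u h').2 h, (hdisj u w h).2 h',
      hD'.swap_notMem u w h h']
  ncard_out_eq_ncard_in v := by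
    have hout : Disjoint {u | (v, u) ∈ D} {u | (v, u) ∈ D'} :=
      Set.disjoint_left.2 fun u h h' => (hdisj v u h').1 h
    have hin : Disjoint {u | (u, v) ∈ D} {u | (u, v) ∈ D'} :=
      Set.disjoint_left.2 fun u h h' => (hdisj u v h').1 h
    simp only [Set.mem_union, Set.ofPred_or]
    rw [Set.ncard_union_eq hout
        ((hfin v).subset (hD.out_subset v)) ((hfin v).subset (hD'.out_subset v)),
      Set.ncard_union_eq hin
        ((hfin v).subset (hD.in_subset v)) ((hfin v).subset (hD'.in_subset v)),
      hD.ncard_out_eq_ncard_in, hD'.ncard_out_eq_ncard_in]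

end IsBalancedPartialOrientation

lemma isBalancedPartialOrientation_sUnion (hfin : ∀ v, (G.neighborSet v).Finite)
    {c : Set (Set (V × V))} (hc : IsChain (· ⊆ ·) c)
    (hcD : ∀ D ∈ c, IsBalancedPartialOrientation G D) :
    IsBalancedPartialOrientation G (⋃₀ c) := by
  have hadj : ∀ p ∈ ⋃₀ c, G.Adj p.1 p.2 := by
    rintro p ⟨D, hD, hp⟩
    exact (hcD D hD).adj p hp
  refine ⟨hadj, ?_, fun v => ?_⟩
  · rintro u w ⟨D₁, hD₁, h₁⟩ ⟨D₂, hD₂, h₂⟩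
    rcases hc.total hD₁ hD₂ with h | h
    exacts [(hcD D₂ hD₂).swap_notMem u w (h h₁) h₂,
      (hcD D₁ hD₁).swap_notMem u w h₁ (h h₂)]
  rcases c.eq_empty_or_nonempty with rfl | hne
  · simp
  have hS : ((fun u => (v, u)) '' {u | (v, u) ∈ ⋃₀ c} ∪
      (fun u => (u, v)) '' {u | (u, v) ∈ ⋃₀ c}).Finite :=
    (((hfin v).subset fun u hu => hadj (v, u) hu).image _).union
      (((hfin v).subset fun u hu => (hadj (u, v) hu).symm).image _)
  obtain ⟨D, hDc, hSD⟩ := hc.directedOn.exists_mem_subset_of_finite_of_subset_sUnion hne hS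
    (by rintro _ (⟨u, hu, rfl⟩ | ⟨u, hu, rfl⟩) <;> exact hu)
  have hout : {u | (v, u) ∈ ⋃₀ c} = {u | (v, u) ∈ D} :=
    Set.Subset.antisymm (fun u hu => hSD (.inl ⟨u, hu, rfl⟩)) fun u hu => ⟨D, hDc, hu⟩
  have hin : {u | (u, v) ∈ ⋃₀ c} = {u | (u, v) ∈ D} :=
    Set.Subset.antisymm (fun u hu => hSD (.inr ⟨u, hu, rfl⟩)) fun u hu => ⟨D, hDc, hu⟩
  rw [hout, hin]
  exact (hcD D hDc).ncard_out_eq_ncard_in v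

lemma isBalancedPartialOrientation_range {A : Type*} [AddGroup A] {g : A → V}
    (hg : Function.Injective g) {s : A} (hs : s + s ≠ 0) (hadj : ∀ i, H.Adj (g i) (g (i + s))) :
    IsBalancedPartialOrientation H (Set.range fun i => (g i, g (i + s))) := by
  refine ⟨fun _ ⟨i, hi⟩ => hi ▸ hadj i, ?_, fun v => ?_⟩
  · rintro u w ⟨i, hi⟩ ⟨j, hj⟩
    simp only [Prod.mk.injEq] at hi hj
    have hji : j = i + s := hg (hj.1.trans hi.2.symm)
    have hij : i = j + s := hg (hi.1.trans hj.2.symm)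
    exact hs (by rw [hji, add_assoc] at hij; exact left_eq_add.1 hij)
  have hout : {u | (v, u) ∈ Set.range fun i => (g i, g (i + s))} =
      (fun i => g (i + s)) '' {i | g i = v} := by
    ext u
    simp [Prod.ext_iff]
  have hin : {u | (u, v) ∈ Set.range fun i => (g i, g (i + s))} =
      (fun i => g (i - s)) '' {i | g i = v} := by
    ext u
    simp only [Set.mem_ofPred_eq, Set.mem_range, Prod.ext_iff, Set.mem_image]
    constructor
    · rintro ⟨j, rfl, rfl⟩
      exact ⟨j + s, rfl, by simp⟩
    · rintro ⟨i, rfl, rfl⟩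
      exact ⟨i - s, rfl, by simp⟩
  rw [hout, hin, Set.ncard_image_of_injective _ fun i j h => add_left_injective s (hg h),
    Set.ncard_image_of_injective _ fun i j h => sub_left_injective (hg h)]

lemma exists_adj_ne_of_even {v u : V} (hfin : (H.neighborSet v).Finite)
    (heven : Even (H.neighborSet v).ncard) (hvu : H.Adj v u) : ∃ w, H.Adj v w ∧ w ≠ u := by
  have hpos : 0 < (H.neighborSet v).ncard := (Set.ncard_pos hfin).2 ⟨u, hvu⟩
  obtain ⟨k, hk⟩ := heven
  exact Set.exists_ne_of_one_lt_ncard (s := H.neighborSet v) (by omega) u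

lemma exists_nonbacktracking_nat_walk (hnext : ∀ u v, H.Adj u v → ∃ w, H.Adj v w ∧ w ≠ u)
    {a b : V} (hab : H.Adj a b) :
    ∃ x : ℕ → V, x 0 = a ∧ x 1 = b ∧ (∀ n, H.Adj (x n) (x (n + 1))) ∧
      ∀ n, x (n + 2) ≠ x n := by
  choose! next hnext using hnext
  let e : ℕ → V × V := fun n => Nat.rec (a, b) (fun _ p => (p.2, next p.1 p.2)) n
  have he : ∀ n, H.Adj (e n).1 (e n).2 := by
    intro n
    induction n with
    | zero => exact hab
    | succ n ih => exact (hnext _ _ ih).1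
  exact ⟨fun n => (e n).1, rfl, rfl, he, fun n => (hnext _ _ (he n)).2⟩

lemma exists_nonbacktracking_int_walk (hnext : ∀ u v, H.Adj u v → ∃ w, H.Adj v w ∧ w ≠ u)
    {a b : V} (hab : H.Adj a b) :
    ∃ f : ℤ → V, f 0 = a ∧ f 1 = b ∧ (∀ n, H.Adj (f n) (f (n + 1))) ∧
      ∀ n, f (n + 2) ≠ f n := by
  obtain ⟨x, hx0, hx1, hxadj, hxnb⟩ := exists_nonbacktracking_nat_walk hnext hab
  obtain ⟨y, hy0, hy1, hyadj, hynb⟩ := exists_nonbacktracking_nat_walk hnext hab.symm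
  -- `y` runs backwards from `a`, so `f (-n) = y (n + 1)`
  refine ⟨fun n => if 0 ≤ n then x n.toNat else y (1 - n).toNat, by simp [hx0], by simp [hx1],
    fun n => ?_, fun n => ?_⟩
  · rcases le_or_gt 0 n with h | h
    · simpa [h, show 0 ≤ n + 1 by omega, show (n + 1).toNat = n.toNat + 1 by omega] using hxadj _
    obtain rfl | h' := eq_or_lt_of_le (show n ≤ -1 by omega)
    · simpa [hx0, ← hy1] using (hyadj 1).symm
    · simpa [show ¬ 0 ≤ n by omega, show ¬ 0 ≤ n + 1 by omega,
        show (1 - n).toNat = (-n).toNat + 1 by omega] using (hyadj _).symm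
  · obtain h | rfl | rfl | h : 0 ≤ n ∨ n = -1 ∨ n = -2 ∨ n ≤ -3 := by omega
    · simpa [h, show 0 ≤ n + 2 by omega, show (n + 2).toNat = n.toNat + 2 by omega] using hxnb _
    · simpa [hx1, ← hy0] using (hynb 0).symm
    · simpa [hx0, ← hy1] using (hynb 1).symm
    · simpa [show ¬ 0 ≤ n by omega, show ¬ 0 ≤ n + 2 by omega,
        show (1 - n).toNat = (1 - (n + 2)).toNat + 2 by omega] using (hynb _).symm

lemma exists_cycle_of_not_injective {f : ℤ → V} (hadj : ∀ n, H.Adj (f n) (f (n + 1)))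
    (hnb : ∀ n, f (n + 2) ≠ f n) (hf : ¬ Function.Injective f) :
    ∃ N, 3 ≤ N ∧ ∃ g : ZMod N → V, Function.Injective g ∧
      ∀ k, H.Adj (g k) (g (k + 1)) := by
  classical
  have hex : ∃ d : ℕ, 0 < d ∧ ∃ i, f (i + d) = f i := by
    obtain ⟨m, n, hmn, hne⟩ : ∃ m n, f m = f n ∧ m ≠ n := by
      simpa [Function.Injective] using hf
    rcases hne.lt_or_gt with h | h
    · exact ⟨(n - m).toNat, by omega, m, by rw [show m + (n - m).toNat = n by omega, hmn]⟩
    · exact ⟨(m - n).toNat, by omega, n, by rw [show n + (m - n).toNat = m by omega, hmn]⟩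
  obtain ⟨hd, i, hi⟩ := Nat.find_spec hex
  set d := Nat.find hex
  have hmin : ∀ e < d, 0 < e → ∀ j, f (j + e) ≠ f j := fun e he he0 j hj =>
    Nat.find_min hex he ⟨he0, j, hj⟩
  have hd3 : 3 ≤ d := by
    by_contra! h
    interval_cases hd' : d
    · exact (hadj i).ne (by simpa using hi.symm)
    · exact hnb i (by simpa [add_comm] using hi)
  have : NeZero d := ⟨by omega⟩
  have : Fact (1 < d) := ⟨by omega⟩
  refine ⟨d, hd3, fun k => f (i + k.val), fun k l hkl => ZMod.val_injective d ?_, fun k => ?_⟩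
  · simp only at hkl
    by_contra hne
    have hk := ZMod.val_lt k
    have hl := ZMod.val_lt l
    rcases Nat.lt_or_gt_of_ne hne with h | h
    · exact hmin (l.val - k.val) (by omega) (by omega) (i + k.val)
        (by rw [show i + k.val + (l.val - k.val : ℕ) = i + l.val by push_cast [h.le]; ring, hkl])
    · exact hmin (k.val - l.val) (by omega) (by omega) (i + l.val)
        (by rw [show i + l.val + (k.val - l.val : ℕ) = i + k.val by push_cast [h.le]; ring, hkl])
  · have hval : (k + 1).val = (k.val + 1) % d := by rw [ZMod.val_add, ZMod.val_one]
    obtain h | h : k.val + 1 < d ∨ k.val + 1 = d := by have := ZMod.val_lt k; omega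
    · show H.Adj (f (i + k.val)) (f (i + (k + 1).val))
      rw [hval, Nat.mod_eq_of_lt h, Nat.cast_add, Nat.cast_one, ← add_assoc]
      exact hadj _
    · show H.Adj (f (i + k.val)) (f (i + (k + 1).val))
      rw [hval, h, Nat.mod_self, Nat.cast_zero, add_zero, ← hi,
        show i + (d : ℤ) = i + k.val + 1 by omega]
      exact hadj _

lemma exists_nonempty_isBalancedPartialOrientation (hfin : ∀ v, (H.neighborSet v).Finite)
    (heven : ∀ v, Even (H.neighborSet v).ncard) {a b : V} (hab : H.Adj a b) :
    ∃ D : Set (V × V), D.Nonempty ∧ IsBalancedPartialOrientation H D := by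
  obtain ⟨f, -, -, hadj, hnb⟩ := exists_nonbacktracking_int_walk
    (fun u v huv => exists_adj_ne_of_even (hfin v) (heven v) huv.symm) hab
  by_cases hf : Function.Injective f
  · exact ⟨_, Set.range_nonempty _, isBalancedPartialOrientation_range hf (by norm_num) hadj⟩
  obtain ⟨N, hN, g, hg, hgadj⟩ := exists_cycle_of_not_injective hadj hnb hf
  refine ⟨_, Set.range_nonempty _, isBalancedPartialOrientation_range hg ?_ hgadj⟩
  rw [one_add_one_eq_two, ← Nat.cast_ofNat, Ne, ZMod.natCast_eq_zero_iff]
  exact fun h => by have := Nat.le_of_dvd two_pos h; omega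

lemma exists_isBalancedPartialOrientation_forall_adj (hfin : ∀ v, (G.neighborSet v).Finite)
    (heven : ∀ v, Even (G.neighborSet v).ncard) :
    ∃ D : Set (V × V), IsBalancedPartialOrientation G D ∧
      ∀ u w, G.Adj u w → (u, w) ∈ D ∨ (w, u) ∈ D := by
  obtain ⟨D, hDmax⟩ := zorn_subset {D | IsBalancedPartialOrientation G D} fun c hcS hc =>
    ⟨⋃₀ c, isBalancedPartialOrientation_sUnion hfin hc hcS,
      fun _ => Set.subset_sUnion_of_mem⟩
  have hD : IsBalancedPartialOrientation G D := hDmax.prop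
  refine ⟨D, hD, fun a b hab => ?_⟩
  by_contra! hba
  have hHab : (unoriented G D).Adj a b := ⟨hab, fun h => h.2.elim hba.1 hba.2⟩
  obtain ⟨D', ⟨p, hp⟩, hD'⟩ := exists_nonempty_isBalancedPartialOrientation
    (fun v => (hfin v).subset (neighborSet_mono sdiff_le v))
    (fun v => (hD.even_ncard_neighborSet_iff (hfin v)).1 (heven v)) hHab
  have hdisj : ∀ u w, (u, w) ∈ D' → (u, w) ∉ D ∧ (w, u) ∉ D := fun u w h => by
    have := (hD'.adj _ h).2
    simp only [fromRel_adj, not_and, not_or] at this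
    exact this (hD'.adj _ h).1.ne
  exact (hdisj p.1 p.2 hp).1 (hDmax.2 (hD.union hfin (hD'.mono sdiff_le) hdisj)
    Set.subset_union_left (Set.mem_union_right D hp))

end SimpleGraph

open SimpleGraph in
theorem stmt0_general (V : Type*) (G : SimpleGraph V) [G.LocallyFinite] :
    (∃ r : V → V → Prop,
      (∀ u v : V, r u v → G.Adj u v) ∧
      (∀ u v : V, G.Adj u v → Xor' (r u v) (r v u)) ∧
      (∀ v : V, {u : V | r v u}.ncard = {u : V | r u v}.ncard)) ↔
    (∀ v : V, Even (G.degree v)) := by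
  have hfin : ∀ v, (G.neighborSet v).Finite := fun v => Set.toFinite _
  have hdeg : ∀ v, (G.neighborSet v).ncard = G.degree v := fun v => by
    rw [← Nat.card_coe_set_eq, Nat.card_eq_fintype_card, card_neighborSet_eq_degree]
  simp only [← hdeg]
  constructor
  · rintro ⟨r, hadj, hxor, hcard⟩ v
    have hD : IsBalancedPartialOrientation G {p | r p.1 p.2} :=
      ⟨fun p => hadj p.1 p.2, fun u w huw hwu => by
        rcases hxor u w (hadj u w huw) with ⟨-, h⟩ | ⟨-, h⟩
        exacts [h hwu, h huw], hcard⟩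
    exact hD.even_ncard_neighborSet (fun u w huw => Xor.or (hxor u w huw)) (hfin v)
  · intro heven
    obtain ⟨D, hD, hcover⟩ := exists_isBalancedPartialOrientation_forall_adj hfin heven
    refine ⟨fun u w => (u, w) ∈ D, fun u w h => hD.adj _ h, fun u w huw => ?_,
      hD.ncard_out_eq_ncard_in⟩
    rcases hcover u w huw with h | h
    exacts [.inl ⟨h, hD.swap_notMem u w h⟩, .inr ⟨h, hD.swap_notMem w u h⟩]

/-- An at most countable simple graph with uniformly bounded vertex degrees admits a
balanced orientation (a relation `r` selecting exactly one direction for each edge,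
with equal out- and in-degree at every vertex) iff every vertex has even degree. -/
theorem stmt0 (V : Type*) [Countable V] (G : SimpleGraph V) [G.LocallyFinite]
    (c : ℕ) (hc : 0 < c) (hdeg : ∀ v : V, G.degree v ≤ c) :
    (∃ r : V → V → Prop,
      (∀ u v : V, r u v → G.Adj u v) ∧
      (∀ u v : V, G.Adj u v → Xor' (r u v) (r v u)) ∧
      (∀ v : V, {u : V | r v u}.ncard = {u : V | r u v}.ncard)) ↔
    (∀ v : V, Even (G.degree v)) :=
  stmt0_general V G
end

section
/- Let N ≥ 1, let d : Fin N → ℝ be positive arc lengths with total length L = ∑_j d(j), let α : Fin N → ℝ, and let k ∈ ℝ. There exists a family of coefficients c : Fin N → ℂ, not all zero, satisfying the cyclic transfer conditions c((j+1) mod N) = exp(i·α(j))·exp(i·k·d(j))·c(j) for every j ∈ Fin N, if and only if there exists n ∈ ℤ with k = (2πn − ∑_j α(j)) / L. -/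
/-!
The transfer conditions say `c (j + 1) = e j * c j`, so a solution is determined by `c 0`, and
going once around the loop multiplies it by the monodromy `∏ j, e j = exp (i (∑ α + k L))`.
A solution vanishing somewhere vanishes everywhere, so a nonzero solution exists exactly when the
monodromy is `1`, i.e. when `∑ α + k L ∈ 2πℤ`.
-/

open Finset Complex
open Fin.NatCast

namespace Fin

variable {M : Type*}

theorem partialProd_last [CommMonoid M] {n : ℕ} (f : Fin n → M) :
    partialProd f (last n) = ∏ i, f i := by
  rw [partialProd, val_last, List.take_of_length_le (by simp), List.prod_ofFn]

theorem eq_zero_of_cyclic_recurrence [MulZeroClass M] {N : ℕ} [NeZero N] {e c : Fin N → M}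
    (hc : ∀ j, c (j + 1) = e j * c j) {j₀ : Fin N} (hj₀ : c j₀ = 0) : c = 0 := by
  have hstep : ∀ m : ℕ, c (j₀ + m) = 0 := by
    intro m
    induction m with
    | zero => simpa using hj₀
    | succ m ih => rw [Nat.cast_succ, ← add_assoc, hc, ih, mul_zero]
  funext i
  simpa using hstep (i - j₀).val

theorem exists_ne_zero_cyclic_recurrence_iff [CommMonoidWithZero M] [IsCancelMulZero M]
    [Nontrivial M] {N : ℕ} [NeZero N] (e : Fin N → M) :
    (∃ c : Fin N → M, c ≠ 0 ∧ ∀ j, c (j + 1) = e j * c j) ↔ ∏ j, e j = 1 := by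
  constructor
  · rintro ⟨c, hc0, hc⟩
    have hprod_ne : ∏ j, c j ≠ 0 :=
      prod_ne_zero_iff.mpr fun j _ hj => hc0 (eq_zero_of_cyclic_recurrence hc hj)
    have hshift : ∏ j, c (j + 1) = ∏ j, c j :=
      Fintype.prod_equiv (Equiv.addRight 1) _ _ fun _ => rfl
    have hcancel : (∏ j, e j) * ∏ j, c j = 1 * ∏ j, c j := by
      rw [← prod_mul_distrib, one_mul, ← hshift]
      exact prod_congr rfl fun j _ => (hc j).symm
    exact mul_right_cancel₀ hprod_ne hcancel
  · obtain ⟨n, rfl⟩ := Nat.exists_eq_succ_of_ne_zero (NeZero.ne N)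
    intro he
    refine ⟨partialProd fun i : Fin n => e i.castSucc, fun h => ?_, fun j => ?_⟩
    · simpa using congrFun h 0
    · induction j using lastCases with
      | last => rw [last_add_one, partialProd_zero, partialProd_last, mul_comm, ← he,
          prod_univ_castSucc]
      | cast i => rw [coeSucc_eq_succ, partialProd_succ, mul_comm]

end Fin

theorem Complex.prod_exp_I_mul_mul_exp_I_mul {ι : Type*} (s : Finset ι) (α d : ι → ℝ) (k : ℝ) :
    ∏ j ∈ s, exp (I * α j) * exp (I * k * d j) =
      exp (((∑ j ∈ s, α j + k * ∑ j ∈ s, d j : ℝ) : ℂ) * I) := by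
  simp_rw [← exp_add, ← exp_sum]
  push_cast
  rw [sum_add_distrib, ← mul_sum, ← mul_sum]
  congr 1
  ring

theorem stmt6_general (N : ℕ) [NeZero N] (d : Fin N → ℝ) (hd : ∀ j, 0 < d j)
    (α : Fin N → ℝ) (k : ℝ) :
    (∃ c : Fin N → ℂ, c ≠ 0 ∧ ∀ j : Fin N,
        c (j + 1) = Complex.exp (Complex.I * (α j : ℂ)) *
          Complex.exp (Complex.I * (k : ℂ) * (d j : ℂ)) * c j) ↔
    ∃ n : ℤ, k = (2 * Real.pi * n - ∑ j, α j) / (∑ j, d j) := by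
  have hL : 0 < ∑ j, d j := sum_pos (fun j _ => hd j) univ_nonempty
  rw [Fin.exists_ne_zero_cyclic_recurrence_iff, prod_exp_I_mul_mul_exp_I_mul, ← Circle.coe_exp,
    Circle.coe_eq_one, Circle.exp_eq_one]
  refine exists_congr fun n => ?_
  rw [eq_div_iff hL.ne']
  constructor <;> intro h <;> linarith

/-- The spectrum of a momentum operator on a loop graph with `N` vertices and arc
lengths `d j`, vertex phases `α j`: a nonzero family of coefficients satisfying the
cyclic transfer conditions exists iff `k = (2πn - ∑ α j)/L` with `L = ∑ d j`. -/
theorem stmt6 (N : ℕ) [NeZero N] (hN : 1 ≤ N) (d : Fin N → ℝ) (hd : ∀ j, 0 < d j)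
    (α : Fin N → ℝ) (k : ℝ) :
    (∃ c : Fin N → ℂ, c ≠ 0 ∧ ∀ j : Fin N,
        c (j + 1) = Complex.exp (Complex.I * (α j : ℂ)) *
          Complex.exp (Complex.I * (k : ℂ) * (d j : ℂ)) * c j) ↔
    ∃ n : ℤ, k = (2 * Real.pi * n - ∑ j, α j) / (∑ j, d j) :=
  stmt6_general N d hd α k
end

section
/- Let n ≥ 1, let U be an n×n complex unitary matrix, let ℓ : Fin n → ℝ satisfy ℓ(m) > 0 for all m, and let z ∈ ℂ. If det( U·D(z) − I ) = 0, where D(z) is the diagonal matrix with entries D(z)_{mm} = exp(i·z·ℓ(m)) and I is the identity matrix, then z is real (Im z = 0). -/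
/-!
A zero of the determinant gives a nonzero `v` with `U (D v) = v`. Since `U` is unitary,
`‖D v‖ = ‖v‖`; but `D` multiplies the `m`-th coordinate by a number of modulus
`exp (-(Im z) ℓ m)`, and `y ↦ ∑ (exp (-y ℓ m) |v m|)²` is strictly decreasing because all
`ℓ m > 0`. Equality with its value at `y = 0` therefore forces `Im z = 0`.
-/

open Matrix

theorem Matrix.star_mulVec_dotProduct_mulVec_of_mem_unitaryGroup {R n : Type*} [CommRing R]
    [StarRing R] [Fintype n] [DecidableEq n] {U : Matrix n n R} (hU : U ∈ unitaryGroup n R)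
    (w : n → R) : star (U *ᵥ w) ⬝ᵥ (U *ᵥ w) = star w ⬝ᵥ w := by
  rw [star_mulVec, dotProduct_mulVec, vecMul_vecMul, ← star_eq_conjTranspose,
    (mem_unitaryGroup_iff').1 hU, vecMul_one]

theorem Matrix.sum_norm_sq_mulVec_of_mem_unitaryGroup {𝕜 n : Type*} [RCLike 𝕜] [Fintype n]
    [DecidableEq n] {U : Matrix n n 𝕜} (hU : U ∈ unitaryGroup n 𝕜) (w : n → 𝕜) :
    ∑ i, ‖(U *ᵥ w) i‖ ^ 2 = ∑ i, ‖w i‖ ^ 2 := by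
  have := star_mulVec_dotProduct_mulVec_of_mem_unitaryGroup hU w
  simp only [dotProduct, Pi.star_apply, RCLike.star_def, RCLike.conj_mul] at this
  exact_mod_cast this

theorem strictAnti_sum_sq_exp_neg_mul_mul {ι : Type*} [Fintype ι] {ℓ a : ι → ℝ}
    (hℓ : ∀ j, 0 < ℓ j) (ha : ∀ j, 0 ≤ a j) (ha' : a ≠ 0) :
    StrictAnti fun y => ∑ j, (Real.exp (-(y * ℓ j)) * a j) ^ 2 := by
  intro y₁ y₂ hy
  obtain ⟨j₀, hj₀⟩ := Function.ne_iff.1 ha'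
  refine Finset.sum_lt_sum (fun j _ => ?_) ⟨j₀, Finset.mem_univ _, ?_⟩
  · have := ha j
    have := (hℓ j).le
    gcongr
  · have := (ha j₀).lt_of_ne' hj₀
    have := hℓ j₀
    gcongr

theorem Complex.norm_exp_I_mul_mul_ofReal (z : ℂ) (x : ℝ) :
    ‖Complex.exp (Complex.I * z * x)‖ = Real.exp (-(z.im * x)) := by
  simp [Complex.norm_exp, Complex.mul_re]

theorem stmt9_general (n : ℕ) (U : Matrix (Fin n) (Fin n) ℂ)
    (hU : U ∈ Matrix.unitaryGroup (Fin n) ℂ)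
    (ℓ : Fin n → ℝ) (hℓ : ∀ m, 0 < ℓ m) (z : ℂ)
    (h : (U * Matrix.diagonal (fun m => Complex.exp (Complex.I * z * (ℓ m : ℂ))) - 1).det
        = 0) :
    z.im = 0 := by
  set D := Matrix.diagonal fun m => Complex.exp (Complex.I * z * (ℓ m : ℂ))
  obtain ⟨v, hv, hker⟩ := exists_mulVec_eq_zero_iff.2 h
  have hfix : U *ᵥ (D *ᵥ v) = v := by
    rw [mulVec_mulVec, ← sub_eq_zero, ← hker, sub_mulVec, one_mulVec]
  have hnorm := sum_norm_sq_mulVec_of_mem_unitaryGroup hU (D *ᵥ v)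
  simp only [hfix, D, mulVec_diagonal, norm_mul, Complex.norm_exp_I_mul_mul_ofReal] at hnorm
  have hv_norm : (fun j => ‖v j‖) ≠ 0 := fun h0 => hv (funext fun j => norm_eq_zero.1 (congrFun h0 j))
  refine (strictAnti_sum_sq_exp_neg_mul_mul hℓ (fun j => norm_nonneg (v j)) hv_norm).injective ?_
  simpa using hnorm.symm

/-- The secular equation `det(U · diag(exp(izℓ_m)) - I) = 0` of a momentum operator on a
finite balanced oriented graph, with `U` unitary and positive edge lengths `ℓ_m`, can be
satisfied only for real values of the spectral parameter `z`. -/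
theorem stmt9 (n : ℕ) (hn : 1 ≤ n) (U : Matrix (Fin n) (Fin n) ℂ)
    (hU : U ∈ Matrix.unitaryGroup (Fin n) ℂ)
    (ℓ : Fin n → ℝ) (hℓ : ∀ m, 0 < ℓ m) (z : ℂ)
    (h : (U * Matrix.diagonal (fun m => Complex.exp (Complex.I * z * (ℓ m : ℂ))) - 1).det
        = 0) :
    z.im = 0 :=
  stmt9_general n U hU ℓ hℓ z h
end

section
/- Let ℓ₁, ℓ₃ > 0 and k ∈ ℝ. There exist complex numbers c₀, c₁, c₂, c₃, c₄ with c₀ = 0, c₄ = 0, (c₁, c₂, c₃) ≠ (0,0,0), satisfying the vertex conditions c₁ = (1/√2)·( exp(i·k·ℓ₃)·c₃ + c₀ ), c₂ = (1/√2)·( exp(i·k·ℓ₃)·c₃ − c₀ ), c₃ = (1/√2)·exp(i·k·ℓ₁)·( c₁ + c₂ ), c₄ = (1/√2)·exp(i·k·ℓ₁)·( c₁ − c₂ ), if and only if there exists n ∈ ℤ with k = 2πn/(ℓ₁ + ℓ₃). -/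
/-!
With no incoming wave (`c₀ = 0`) the vertex conditions force `c₁ = c₂`, so nothing leaves
through the outgoing lead, and they send `c₃` once around the loop: the two factors `1/√2`
combine with the two parallel edges into `1`, leaving the round-trip phase
`exp (i k (ℓ₁ + ℓ₃))`. A nonzero solution therefore exists exactly when this phase is `1`.
-/

/-- The vertex coupling conditions for the two-loop graph with an incoming and an
outgoing lead, equal lengths `ℓ₁ = ℓ₂`, and coupling matrix `(1/√2)·[[1,1],[1,-1]]`
at both vertices, for an eigenfunction `c_j · exp(ikx)` on the `j`-th edge. -/
def twoLoopConds (ℓ₁ ℓ₃ k : ℝ) (c₀ c₁ c₂ c₃ c₄ : ℂ) : Prop :=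
  c₁ = (1 / (Real.sqrt 2 : ℂ)) * (Complex.exp (Complex.I * (k : ℂ) * (ℓ₃ : ℂ)) * c₃ + c₀) ∧
  c₂ = (1 / (Real.sqrt 2 : ℂ)) * (Complex.exp (Complex.I * (k : ℂ) * (ℓ₃ : ℂ)) * c₃ - c₀) ∧
  c₃ = (1 / (Real.sqrt 2 : ℂ)) * Complex.exp (Complex.I * (k : ℂ) * (ℓ₁ : ℂ)) * (c₁ + c₂) ∧
  c₄ = (1 / (Real.sqrt 2 : ℂ)) * Complex.exp (Complex.I * (k : ℂ) * (ℓ₁ : ℂ)) * (c₁ - c₂)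

open Complex

lemma exp_I_mul_ofReal_eq_one_iff {θ : ℝ} :
    exp (I * θ) = 1 ↔ ∃ n : ℤ, θ = 2 * Real.pi * n := by
  rw [mul_comm, ← Circle.coe_exp, Circle.coe_eq_one, Circle.exp_eq_one]
  simp only [mul_comm]

lemma one_div_ofReal_sqrt_two_mul_self : 1 / (Real.sqrt 2 : ℂ) * (1 / Real.sqrt 2) = 1 / 2 := by
  rw [div_mul_div_comm, ← ofReal_mul, Real.mul_self_sqrt zero_le_two, one_mul, ofReal_ofNat]

lemma twoLoopConds_zero_leads_iff (ℓ₁ ℓ₃ k : ℝ) (c₁ c₂ c₃ : ℂ) :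
    twoLoopConds ℓ₁ ℓ₃ k 0 c₁ c₂ c₃ 0 ↔
      c₁ = 1 / Real.sqrt 2 * (exp (I * k * ℓ₃) * c₃) ∧ c₂ = c₁ ∧
        c₃ = exp (I * k * (ℓ₁ + ℓ₃)) * c₃ := by
  have hs := one_div_ofReal_sqrt_two_mul_self
  set s : ℂ := 1 / Real.sqrt 2
  set e₁ := exp (I * k * ℓ₁)
  set e₃ := exp (I * k * ℓ₃)
  rw [mul_add, exp_add]
  simp only [twoLoopConds, add_zero, sub_zero]
  constructor
  · rintro ⟨h₁, h₂, h₃, -⟩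
    exact ⟨h₁, h₂.trans h₁.symm,
      by linear_combination h₃ + s * e₁ * h₁ + s * e₁ * h₂ + 2 * e₁ * e₃ * c₃ * hs⟩
  · rintro ⟨h₁, h₂, h₃⟩
    refine ⟨h₁, h₂.trans h₁, ?_, by rw [h₂, sub_self, mul_zero]⟩
    linear_combination h₃ - 2 * s * e₁ * h₁ - s * e₁ * h₂ - 2 * e₁ * e₃ * c₃ * hs

lemma exists_ne_zero_twoLoopConds_zero_leads_iff (ℓ₁ ℓ₃ k : ℝ) :
    (∃ c₁ c₂ c₃ : ℂ, ¬(c₁ = 0 ∧ c₂ = 0 ∧ c₃ = 0) ∧ twoLoopConds ℓ₁ ℓ₃ k 0 c₁ c₂ c₃ 0) ↔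
      exp (I * k * (ℓ₁ + ℓ₃)) = 1 := by
  simp only [twoLoopConds_zero_leads_iff]
  constructor
  · rintro ⟨c₁, c₂, c₃, hne, h₁, h₂, h₃⟩
    have hc₃ : c₃ ≠ 0 := fun h ↦ hne ⟨by simp [h₁, h], by simp [h₂, h₁, h], h⟩
    exact mul_right_cancel₀ hc₃ (by rw [one_mul, ← h₃])
  · intro h
    exact ⟨_, _, 1, fun h0 ↦ one_ne_zero h0.2.2, rfl, rfl, by rw [h, one_mul]⟩

/-- Embedded eigenvalues of the momentum operator on the two-loop graph with leads:
a nonzero compactly supported eigenfunction (i.e. a solution of the vertex conditions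
with `c₀ = c₄ = 0` and `(c₁,c₂,c₃) ≠ 0`) exists iff `k = 2πn/(ℓ₁+ℓ₃)` for some integer
`n`; in particular the unique continuation principle fails. -/
theorem stmt12 (ℓ₁ ℓ₃ : ℝ) (h1 : 0 < ℓ₁) (h3 : 0 < ℓ₃) (k : ℝ) :
    (∃ c₀ c₁ c₂ c₃ c₄ : ℂ, c₀ = 0 ∧ c₄ = 0 ∧ ¬(c₁ = 0 ∧ c₂ = 0 ∧ c₃ = 0) ∧
      twoLoopConds ℓ₁ ℓ₃ k c₀ c₁ c₂ c₃ c₄) ↔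
    ∃ n : ℤ, k = 2 * Real.pi * n / (ℓ₁ + ℓ₃) := by
  have hL : ℓ₁ + ℓ₃ ≠ 0 := by positivity
  simp only [exists_and_left, exists_eq_left]
  rw [exists_ne_zero_twoLoopConds_zero_leads_iff, mul_assoc, ← ofReal_add, ← ofReal_mul,
    exp_I_mul_ofReal_eq_one_iff]
  simp only [eq_div_iff hL]
end

section
/- Let ℓ₁, ℓ₃ > 0 and k ∈ ℝ, and suppose k ≠ 2πn/(ℓ₁ + ℓ₃) for every n ∈ ℤ. Then every tuple of complex numbers (c₀, c₁, c₂, c₃, c₄) satisfying the vertex conditions c₁ = (1/√2)·( exp(i·k·ℓ₃)·c₃ + c₀ ), c₂ = (1/√2)·( exp(i·k·ℓ₃)·c₃ − c₀ ), c₃ = (1/√2)·exp(i·k·ℓ₁)·( c₁ + c₂ ), c₄ = (1/√2)·exp(i·k·ℓ₁)·( c₁ − c₂ ) must have c₃ = 0, c₁ = c₀/√2, c₂ = −c₀/√2 and c₄ = exp(i·k·ℓ₁)·c₀; in particular, for every k ∈ ℝ and every c₀ ∈ ℂ such a solution with c₃ = 0 exists. -/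
open Complex

lemma one_div_ofReal_sqrt_two_sq : (1 / (Real.sqrt 2 : ℂ)) ^ 2 = 1 / 2 := by
  rw [div_pow, ← ofReal_pow, Real.sq_sqrt zero_le_two]
  norm_num

lemma exp_I_mul_ne_one {k L : ℝ} (hL : L ≠ 0) (hk : ∀ n : ℤ, k ≠ 2 * Real.pi * n / L) :
    exp (I * k * L) ≠ 1 := by
  rw [Ne, exp_eq_one_iff]
  rintro ⟨n, hn⟩
  have him : k * L = n * (2 * Real.pi) := by simpa using congrArg im hn
  exact hk n (by field_simp; linarith)

namespace twoLoopConds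

variable {ℓ₁ ℓ₃ k : ℝ} {c₀ c₁ c₂ c₃ c₄ : ℂ}

lemma exp_mul_returning_eq_returning (h : twoLoopConds ℓ₁ ℓ₃ k c₀ c₁ c₂ c₃ c₄) :
    exp (I * k * ↑(ℓ₁ + ℓ₃)) * c₃ = c₃ := by
  obtain ⟨h₁, h₂, h₃, -⟩ := h
  rw [ofReal_add, mul_add, exp_add]
  linear_combination -h₃ - (1 / (Real.sqrt 2 : ℂ)) * exp (I * k * ℓ₁) * (h₁ + h₂) -
    2 * exp (I * k * ℓ₁) * exp (I * k * ℓ₃) * c₃ * one_div_ofReal_sqrt_two_sq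

lemma returning_zero_iff :
    twoLoopConds ℓ₁ ℓ₃ k c₀ c₁ c₂ 0 c₄ ↔
      c₁ = c₀ / Real.sqrt 2 ∧ c₂ = -c₀ / Real.sqrt 2 ∧ c₄ = exp (I * k * ℓ₁) * c₀ := by
  unfold twoLoopConds
  constructor
  · rintro ⟨rfl, rfl, -, rfl⟩
    refine ⟨by ring, by ring, ?_⟩
    linear_combination 2 * exp (I * k * ℓ₁) * c₀ * one_div_ofReal_sqrt_two_sq
  · rintro ⟨rfl, rfl, rfl⟩
    refine ⟨by ring, by ring, by ring, ?_⟩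
    linear_combination -2 * exp (I * k * ℓ₁) * c₀ * one_div_ofReal_sqrt_two_sq

end twoLoopConds

/-- Away from the embedded eigenvalues `2πn/(ℓ₁+ℓ₃)`, every generalized eigenfunction of
the momentum operator on the two-loop graph with leads vanishes on the returning edge:
`c₃ = 0`, `c₁ = c₀/√2`, `c₂ = -c₀/√2`, `c₄ = e^{ikℓ₁} c₀`; and conversely, for every
`k ∈ ℝ` and every `c₀` such a solution with `c₃ = 0` exists. -/
theorem stmt13 (ℓ₁ ℓ₃ : ℝ) (h1 : 0 < ℓ₁) (h3 : 0 < ℓ₃) (k : ℝ)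
    (hk : ∀ n : ℤ, k ≠ 2 * Real.pi * n / (ℓ₁ + ℓ₃)) :
    (∀ c₀ c₁ c₂ c₃ c₄ : ℂ, twoLoopConds ℓ₁ ℓ₃ k c₀ c₁ c₂ c₃ c₄ →
      c₃ = 0 ∧ c₁ = c₀ / (Real.sqrt 2 : ℂ) ∧ c₂ = -c₀ / (Real.sqrt 2 : ℂ) ∧
      c₄ = Complex.exp (Complex.I * (k : ℂ) * (ℓ₁ : ℂ)) * c₀) ∧
    (∀ k' : ℝ, ∀ c₀ : ℂ, ∃ c₁ c₂ c₃ c₄ : ℂ, c₃ = 0 ∧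
      twoLoopConds ℓ₁ ℓ₃ k' c₀ c₁ c₂ c₃ c₄) := by
  have hexp : exp (I * k * ↑(ℓ₁ + ℓ₃)) ≠ 1 := exp_I_mul_ne_one (by positivity) hk
  refine ⟨fun c₀ c₁ c₂ c₃ c₄ h => ?_, fun k' c₀ => ?_⟩
  · obtain rfl : c₃ = 0 :=
      (mul_left_eq_self₀.mp h.exp_mul_returning_eq_returning).resolve_left hexp
    exact ⟨rfl, twoLoopConds.returning_zero_iff.mp h⟩
  · exact ⟨_, _, 0, _, rfl, twoLoopConds.returning_zero_iff.mpr ⟨rfl, rfl, rfl⟩⟩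
end
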